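/- For any odd natural number N, the identity Σ''_{j=−(N−1)}^{N−1} i^j e^{−ijz} = (−1)^{(N−1)/2} cos(Nz)/cos(z) holds for all z where cos z ≠ 0, where Σ'' denotes the sum over j = −(N−1), −(N−3), ..., N−3, N−1 (steps of 2). -/

import Mathlib

/-!
Since `i = e^{iπ/2}`, the `j`-th summand is `e^{ijθ}` with `θ = π/2 - z`, so the sum is the Dirichlet
kernel: multiplied by `e^{iθ} - e^{-iθ}` it telescopes to `e^{iNθ} - e^{-iNθ}`, i.e. it equals
`sin (Nθ) / sin θ`. Here `sin θ = cos z`, and for `N = 2m + 1` we have `Nθ = π/2 - (Nz - mπ)`, whence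
`sin (Nθ) = (-1)^m cos (Nz)`.
-/

open Complex Filter MeasureTheory

/-- The digamma function. -/
noncomputable def digamma (z : ℂ) : ℂ := deriv Complex.Gamma z / Complex.Gamma z

/-- Euler–Mascheroni constant `γ = -ψ(1)`. -/
noncomputable def eulerGamma : ℝ := -deriv Real.Gamma 1

/-- The first Stieltjes constant. -/
noncomputable def stieltjes1 : ℝ :=
  limUnder atTop (fun m : ℕ => (∑ k ∈ Finset.Icc 1 m, Real.log k / k) - (Real.log m) ^ 2 / 2)

/-- The Herglotz function. -/
noncomputable def herglotzF (x : ℂ) : ℂ :=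
  ∑' n : ℕ+, (_root_.digamma ((n : ℂ) * x) - Complex.log ((n : ℂ) * x)) / (n : ℂ)

/-- The higher Herglotz function of Vlasenko–Zagier. -/
noncomputable def higherHerglotz (k : ℕ) (x : ℂ) : ℂ :=
  ∑' n : ℕ+, _root_.digamma ((n : ℂ) * x) / (n : ℂ) ^ k

/-- The extended higher Herglotz function. -/
noncomputable def extHerglotz (k N : ℝ) (x : ℂ) : ℂ :=
  ∑' n : ℕ+, (_root_.digamma ((((n : ℝ) ^ N : ℝ) : ℂ) * x) - Complex.log ((((n : ℝ) ^ N : ℝ) : ℂ) * x))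
      / (n : ℂ) ^ (k : ℂ)

/-- The generalized polylogarithm `ₙLi_k(w) = Σ w^{n^N}/n^k`. -/
noncomputable def genLi (k N : ℝ) (w : ℂ) : ℂ :=
  ∑' n : ℕ+, w ^ ((((n : ℝ) ^ N : ℝ)) : ℂ) / (n : ℂ) ^ (k : ℂ)

/-- The polylogarithm `Li_k(z) = Σ zⁿ/n^k`. -/
noncomputable def polylog (k : ℕ) (z : ℂ) : ℂ :=
  ∑' n : ℕ+, z ^ (n : ℕ) / (n : ℂ) ^ k

/-- The dilogarithm, analytically continued via its integral representation. -/
noncomputable def dilog2 (z : ℂ) : ℂ := -∫ t in (0:ℝ)..1, Complex.log (1 - z * t) / t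

theorem sum_range_zpow_mul_sub_inv {K : Type*} [DivisionRing K] {x : K} (hx : x ≠ 0) (N : ℕ) :
    (∑ l ∈ Finset.range N, x ^ (2 * (l : ℤ) - (N - 1))) * (x - x⁻¹) = x ^ (N : ℤ) - x ^ (-(N : ℤ)) := by
  have hterm : ∀ l : ℕ, x ^ (2 * (l : ℤ) - (N - 1)) * (x - x⁻¹) =
      x ^ (2 * ((l + 1 : ℕ) : ℤ) - N) - x ^ (2 * (l : ℤ) - N) := by
    intro l
    rw [mul_sub, ← zpow_add_one₀ hx, ← zpow_sub_one₀ hx]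
    congr 2 <;> push_cast <;> ring
  rw [Finset.sum_mul, Finset.sum_congr rfl fun l _ => hterm l,
    Finset.sum_range_sub (fun l : ℕ => x ^ (2 * (l : ℤ) - N))]
  congr 2 <;> push_cast <;> ring

open scoped Real

namespace Complex

theorem exp_mul_I_sub_inv (θ : ℂ) : exp (θ * I) - (exp (θ * I))⁻¹ = 2 * I * sin θ := by
  rw [← exp_neg, ← neg_mul]
  linear_combination -I * two_sin θ + (exp (θ * I) - exp (-θ * I)) * I_sq

theorem sum_exp_mul_I_zpow_mul_sin (θ : ℂ) (N : ℕ) :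
    (∑ l ∈ Finset.range N, exp (θ * I) ^ (2 * (l : ℤ) - (N - 1))) * sin θ = sin (N * θ) := by
  have hN : exp (θ * I) ^ (N : ℤ) = exp (N * θ * I) := by
    rw [zpow_natCast, ← exp_nat_mul, mul_assoc]
  have key := sum_range_zpow_mul_sub_inv (exp_ne_zero (θ * I)) N
  rw [exp_mul_I_sub_inv, zpow_neg, hN, exp_mul_I_sub_inv] at key
  exact mul_left_cancel₀ (mul_ne_zero two_ne_zero I_ne_zero) (by linear_combination key)

theorem sin_odd_mul_pi_div_two_sub (m : ℕ) (z : ℂ) :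
    sin ((2 * m + 1 : ℕ) * (π / 2 - z)) = (-1) ^ m * cos ((2 * m + 1 : ℕ) * z) := by
  push_cast
  rw [show (2 * m + 1) * (π / 2 - z) = π / 2 - ((2 * m + 1) * z - m * π) by ring,
    sin_pi_div_two_sub, cos_antiperiodic.sub_nat_mul_eq]

theorem I_zpow_mul_exp (z : ℂ) (j : ℤ) :
    I ^ j * exp (-I * j * z) = exp ((π / 2 - z) * I) ^ j := by
  nth_rewrite 1 [← exp_pi_div_two_mul_I]
  rw [← exp_int_mul, ← exp_int_mul, ← exp_add]
  ring_nf

end Complex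

theorem cos_ratio_sum (N : ℕ) (hN : Odd N) (z : ℂ) (hz : Complex.cos z ≠ 0) :
    ∑ l ∈ Finset.range N,
        I ^ (2 * (l : ℤ) - ((N : ℤ) - 1)) *
          Complex.exp (-I * (2 * (l : ℤ) - ((N : ℤ) - 1)) * z) =
      (-1 : ℂ) ^ ((N - 1) / 2) * Complex.cos ((N : ℂ) * z) / Complex.cos z := by
  obtain ⟨m, rfl⟩ := hN
  have kernel := sum_exp_mul_I_zpow_mul_sin (π / 2 - z) (2 * m + 1)
  rw [sin_pi_div_two_sub, sin_odd_mul_pi_div_two_sub] at kernel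
  rw [Nat.add_sub_cancel, Nat.mul_div_cancel_left m two_pos, eq_div_iff hz, ← kernel]
  congr 1
  refine Finset.sum_congr rfl fun l _ => ?_
  rw [← I_zpow_mul_exp]
  push_cast
  ring_nf
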